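/- There exists a constant C > 0 such that for every measurable ψ : ℝ³ → ℝ one has sup_{k₁ ∈ ℝ³} ∫_{ℝ³×𝕊²} |ψ(k₂*)| b( ((k₁−k₂)/|k₁−k₂|) · σ ) dk₂ dσ ≤ C ‖ψ‖_{L¹(ℝ³)} and sup_{k₂ ∈ ℝ³} ∫_{ℝ³×𝕊²} |ψ(k₁*)| b( ((k₁−k₂)/|k₁−k₂|) · σ ) dk₁ dσ ≤ C ‖ψ‖_{L¹(ℝ³)}. -/

import Mathlib

/-
Fix σ and substitute k₁ = k₂ + v (resp. k₂ = k₁ + v): then k₁* = k₂ + ½(v + |v|σ)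
(resp. k₂* = k₁ + ½(v + |v|(−σ))) and the cutoff restricts v to the half-space ⟨v, σ⟩ > 0
(resp. ⟨v, −σ⟩ > 0). On the half-space ⟨v, τ⟩ > 0 the map v ↦ v + |v|τ is injective, and by the
matrix determinant lemma its Jacobian is 1 + ⟨v/|v|, τ⟩ ≥ 1, so the change of variables formula
bounds the v-integral by 2³‖ψ‖₁. Integrating over σ ∈ 𝕊² gives the claim for any C > 8|𝕊²|.
-/

open MeasureTheory Real
open scoped InnerProductSpace ENNReal

noncomputable section

/-- Three dimensional Euclidean space. -/
abbrev R3 : Type := EuclideanSpace ℝ (Fin 3)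

/-- The standard surface measure on the unit sphere 𝕊² ⊂ ℝ³. -/
def sphMeas : Measure (Metric.sphere (0 : R3) 1) := (volume : Measure R3).toSphere

/-- k₁* = (k₁+k₂)/2 + (|k₁−k₂|/2) σ. -/
def kst1 (k₁ k₂ : R3) (σ : Metric.sphere (0 : R3) 1) : R3 :=
  (2:ℝ)⁻¹ • (k₁ + k₂) + (‖k₁ - k₂‖ / 2) • (σ : R3)

/-- k₂* = (k₁+k₂)/2 − (|k₁−k₂|/2) σ. -/
def kst2 (k₁ k₂ : R3) (σ : Metric.sphere (0 : R3) 1) : R3 :=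
  (2:ℝ)⁻¹ • (k₁ + k₂) - (‖k₁ - k₂‖ / 2) • (σ : R3)

/-- b = 𝟙_{(0,∞)}, the indicator function of the positive reals. -/
def bInd : ℝ → ℝ := Set.indicator (Set.Ioi (0:ℝ)) (fun _ => (1:ℝ))

open Module

theorem lintegral_lintegral_le_measure_univ_mul {α β : Type*} [MeasurableSpace α]
    [MeasurableSpace β] {μ : Measure α} {ν : Measure β} [SFinite μ] [SFinite ν]
    {F : α → β → ℝ≥0∞} (hF : AEMeasurable (Function.uncurry F) (μ.prod ν)) {A : ℝ≥0∞}
    (hA : ∀ y, ∫⁻ x, F x y ∂μ ≤ A) :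
    ∫⁻ x, ∫⁻ y, F x y ∂ν ∂μ ≤ ν Set.univ * A := by
  rw [lintegral_lintegral_swap hF, mul_comm, ← lintegral_const]
  exact lintegral_mono hA

theorem LinearMap.det_id_add_smulRight {R M : Type*} [CommRing R] [AddCommGroup M] [Module R M]
    [Module.Free R M] [Module.Finite R M] (f : M →ₗ[R] R) (u : M) :
    LinearMap.det (LinearMap.id + f.smulRight u) = 1 + f u := by
  classical
  let b := Free.chooseBasis R M
  have hM : LinearMap.toMatrix b b (LinearMap.id + f.smulRight u)
      = 1 + Matrix.vecMulVec (b.repr u) (fun j => f (b j)) := by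
    ext i j
    simp [LinearMap.toMatrix_apply, Matrix.one_apply, Finsupp.single_apply, Matrix.vecMulVec_apply,
      mul_comm, eq_comm]
  rw [← LinearMap.det_toMatrix b, hM, Matrix.vecMulVec_eq Unit,
    Matrix.det_one_add_replicateCol_mul_replicateRow]
  conv_rhs => rw [← b.sum_repr u, map_sum]
  simp [dotProduct, mul_comm]

section InnerProductSpace

variable {E : Type*} [NormedAddCommGroup E] [InnerProductSpace ℝ E]

theorem hasStrictFDerivAt_norm_of_ne_zero {v : E} (hv : v ≠ 0) :
    HasStrictFDerivAt (‖·‖) (innerSL ℝ (‖v‖⁻¹ • v)) v := by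
  have h := (hasStrictFDerivAt_norm_sq v).sqrt (by positivity)
  simp only [Real.sqrt_sq_eq_abs, abs_norm] at h
  refine h.congr_fderiv ?_
  ext w
  simp only [one_div, mul_inv_rev, smul_apply, coe_innerSL_apply,
    nsmul_eq_mul, Nat.cast_ofNat, smul_eq_mul, map_smul]
  field_simp

theorem injOn_add_norm_smul {τ : E} (hτ : ‖τ‖ = 1) :
    Set.InjOn (fun v => v + ‖v‖ • τ) {v | 0 < ⟪v, τ⟫_ℝ} := by
  intro a ha b hb hab
  simp only [Set.mem_ofPred_eq] at ha hb hab
  set t := ‖b‖ - ‖a‖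
  have ha_eq : a = b + t • τ := by linear_combination (norm := module) hab
  have hsq : ‖a‖ ^ 2 = ‖b‖ ^ 2 + 2 * t * ⟪b, τ⟫_ℝ + t ^ 2 := by
    rw [ha_eq, norm_add_sq_real, real_inner_smul_right, norm_smul, hτ, Real.norm_eq_abs, mul_one,
      sq_abs]
    ring
  -- with `‖a‖ = ‖b‖ - t` this reads `t * (‖b‖ + ⟪b, τ⟫) = 0`, and the second factor is positive
  have ht : t = 0 := by nlinarith [norm_nonneg a, norm_nonneg b]
  rw [ha_eq, ht, zero_smul, add_zero]

theorem ofReal_mul_bInd_inner_inv_norm_smul (a : ℝ) (v τ : E) :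
    ENNReal.ofReal (a * bInd ⟪‖v‖⁻¹ • v, τ⟫_ℝ)
      = {v | 0 < ⟪v, τ⟫_ℝ}.indicator (fun _ => ENNReal.ofReal a) v := by
  rcases eq_or_ne v 0 with rfl | hv
  · simp [bInd]
  · have hpos : 0 < ‖v‖⁻¹ * ⟪v, τ⟫_ℝ ↔ 0 < ⟪v, τ⟫_ℝ := mul_pos_iff_of_pos_left (by positivity)
    simp only [bInd, Set.indicator_apply, real_inner_smul_left, Set.mem_Ioi, Set.mem_ofPred_eq,
      hpos]
    split_ifs <;> simp

variable [FiniteDimensional ℝ E]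

theorem det_id_add_innerSL_smulRight (w u : E) :
    (ContinuousLinearMap.id ℝ E + (innerSL ℝ w).smulRight u).det = 1 + ⟪w, u⟫_ℝ :=
  LinearMap.det_id_add_smulRight (innerₛₗ ℝ w) u

variable [MeasurableSpace E] [BorelSpace E] (μ : Measure E) [μ.IsAddHaarMeasure]

theorem lintegral_comp_add_smul (g : E → ℝ≥0∞) (c : E) {r : ℝ} (hr : r ≠ 0) :
    ∫⁻ u, g (c + r • u) ∂μ = ENNReal.ofReal |(r ^ finrank ℝ E)⁻¹| * ∫⁻ x, g x ∂μ := by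
  have hmap := lintegral_map_equiv (fun x => g (c + x))
    (Homeomorph.smulOfNeZero r hr).toMeasurableEquiv (μ := μ)
  simp only [Homeomorph.toMeasurableEquiv_coe, Homeomorph.smulOfNeZero_apply] at hmap
  rw [← hmap, Measure.map_addHaar_smul μ hr, lintegral_smul_measure, smul_eq_mul,
    lintegral_add_left_eq_self]

theorem setLIntegral_comp_add_norm_smul_le {τ : E} (hτ : ‖τ‖ = 1) (g : E → ℝ≥0∞) :
    ∫⁻ v in {v | 0 < ⟪v, τ⟫_ℝ}, g (v + ‖v‖ • τ) ∂μ ≤ ∫⁻ x, g x ∂μ := by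
  set H := {v : E | 0 < ⟪v, τ⟫_ℝ}
  have hH : MeasurableSet H := measurableSet_lt measurable_const (by fun_prop)
  have hne : ∀ v ∈ H, v ≠ 0 := by
    rintro v hv rfl
    simp [H] at hv
  set φ' : E → E →L[ℝ] E :=
    fun v => ContinuousLinearMap.id ℝ E + (innerSL ℝ (‖v‖⁻¹ • v)).smulRight τ
  have hφ' : ∀ v ∈ H, HasFDerivWithinAt (fun v => v + ‖v‖ • τ) (φ' v) H v := fun v hv =>
    ((hasFDerivAt_id v).add
      ((hasStrictFDerivAt_norm_of_ne_zero (hne v hv)).hasFDerivAt.smul_const τ)).hasFDerivWithinAt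
  have hdet : ∀ v ∈ H, 1 ≤ ENNReal.ofReal |(φ' v).det| := by
    intro v hv
    have hcos : 0 ≤ ⟪‖v‖⁻¹ • v, τ⟫_ℝ := by
      rw [real_inner_smul_left]
      exact mul_nonneg (by positivity) hv.le
    rw [det_id_add_innerSL_smulRight, ENNReal.one_le_ofReal]
    exact le_abs.mpr (.inl (by linarith))
  calc ∫⁻ v in H, g (v + ‖v‖ • τ) ∂μ
      ≤ ∫⁻ v in H, ENNReal.ofReal |(φ' v).det| * g (v + ‖v‖ • τ) ∂μ :=
        setLIntegral_mono' hH fun v hv => le_mul_of_one_le_left' (hdet v hv)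
    _ = ∫⁻ x in (fun v => v + ‖v‖ • τ) '' H, g x ∂μ :=
        (lintegral_image_eq_lintegral_abs_det_fderiv_mul μ hH hφ' (injOn_add_norm_smul hτ) g).symm
    _ ≤ ∫⁻ x, g x ∂μ := setLIntegral_le_lintegral _ _

theorem lintegral_ofReal_mul_bInd_le (ψ : E → ℝ) (c : E) {τ : E} (hτ : ‖τ‖ = 1) :
    ∫⁻ v, ENNReal.ofReal (|ψ (c + (2:ℝ)⁻¹ • (v + ‖v‖ • τ))| * bInd ⟪‖v‖⁻¹ • v, τ⟫_ℝ) ∂μ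
      ≤ 2 ^ finrank ℝ E * ∫⁻ x, ENNReal.ofReal |ψ x| ∂μ := by
  have hH : MeasurableSet {v : E | 0 < ⟪v, τ⟫_ℝ} := measurableSet_lt measurable_const (by fun_prop)
  calc _ = ∫⁻ v in {v | 0 < ⟪v, τ⟫_ℝ}, ENNReal.ofReal |ψ (c + (2:ℝ)⁻¹ • (v + ‖v‖ • τ))| ∂μ := by
        rw [← lintegral_indicator hH]
        exact lintegral_congr fun v => ofReal_mul_bInd_inner_inv_norm_smul _ v τ
    _ ≤ ∫⁻ u, ENNReal.ofReal |ψ (c + (2:ℝ)⁻¹ • u)| ∂μ :=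
        setLIntegral_comp_add_norm_smul_le μ hτ fun u => ENNReal.ofReal |ψ (c + (2:ℝ)⁻¹ • u)|
    _ = 2 ^ finrank ℝ E * ∫⁻ x, ENNReal.ofReal |ψ x| ∂μ := by
        rw [lintegral_comp_add_smul μ (fun x => ENNReal.ofReal |ψ x|) c (r := 2⁻¹) (by norm_num)]
        congr 1
        rw [inv_pow, inv_inv, abs_of_pos (by positivity), ENNReal.ofReal_pow zero_le_two,
          ENNReal.ofReal_ofNat]

end InnerProductSpace

theorem kst1_add_left (k v : R3) (σ : Metric.sphere (0 : R3) 1) :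
    kst1 (k + v) k σ = k + (2:ℝ)⁻¹ • (v + ‖v‖ • (σ : R3)) := by
  rw [kst1, add_sub_cancel_left]
  module

theorem kst2_add_right (k v : R3) (σ : Metric.sphere (0 : R3) 1) :
    kst2 k (k + v) σ = k + (2:ℝ)⁻¹ • (v + ‖v‖ • -(σ : R3)) := by
  rw [kst2, sub_add_cancel_left, norm_neg]
  module

theorem lintegral_kst1_le (ψ : R3 → ℝ) (k₂ : R3) (σ : Metric.sphere (0 : R3) 1) :
    ∫⁻ k₁, ENNReal.ofReal (|ψ (kst1 k₁ k₂ σ)| * bInd ⟪‖k₁ - k₂‖⁻¹ • (k₁ - k₂), (σ : R3)⟫_ℝ)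
      ≤ 8 * ∫⁻ x, ENNReal.ofReal |ψ x| := by
  rw [← lintegral_add_left_eq_self _ k₂]
  simp only [kst1_add_left, add_sub_cancel_left]
  refine (lintegral_ofReal_mul_bInd_le volume ψ k₂ (norm_eq_of_mem_sphere σ)).trans_eq ?_
  norm_num [finrank_euclideanSpace_fin]

theorem lintegral_kst2_le (ψ : R3 → ℝ) (k₁ : R3) (σ : Metric.sphere (0 : R3) 1) :
    ∫⁻ k₂, ENNReal.ofReal (|ψ (kst2 k₁ k₂ σ)| * bInd ⟪‖k₁ - k₂‖⁻¹ • (k₁ - k₂), (σ : R3)⟫_ℝ)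
      ≤ 8 * ∫⁻ x, ENNReal.ofReal |ψ x| := by
  rw [← lintegral_add_left_eq_self _ k₁]
  have hinner (v : R3) : ⟪‖-v‖⁻¹ • -v, (σ : R3)⟫_ℝ = ⟪‖v‖⁻¹ • v, -(σ : R3)⟫_ℝ := by
    rw [norm_neg, smul_neg, inner_neg_left, inner_neg_right]
  simp only [kst2_add_right, sub_add_cancel_left, hinner]
  refine (lintegral_ofReal_mul_bInd_le volume ψ k₁
    ((norm_neg _).trans (norm_eq_of_mem_sphere σ))).trans_eq ?_
  norm_num [finrank_euclideanSpace_fin]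

instance : IsFiniteMeasure sphMeas := by
  unfold sphMeas; infer_instance

/-- L¹ estimates (Lemma from [AmLe]): the angular/translational averages of
|ψ(k₂*)| (resp. |ψ(k₁*)|) against the cutoff b(((k₁−k₂)/|k₁−k₂|)·σ) are bounded by C‖ψ‖_{L¹}. -/
theorem L1_averaging :
    ∃ C : ℝ, 0 < C ∧ ∀ ψ : R3 → ℝ, Measurable ψ →
      (∀ k₁ : R3,
        (∫⁻ k₂ : R3, ∫⁻ σ, ENNReal.ofReal
            (|ψ (kst2 k₁ k₂ σ)| * bInd ⟪‖k₁ - k₂‖⁻¹ • (k₁ - k₂), (σ : R3)⟫_ℝ) ∂sphMeas)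
          ≤ ENNReal.ofReal C * ∫⁻ x : R3, ENNReal.ofReal |ψ x|) ∧
      (∀ k₂ : R3,
        (∫⁻ k₁ : R3, ∫⁻ σ, ENNReal.ofReal
            (|ψ (kst1 k₁ k₂ σ)| * bInd ⟪‖k₁ - k₂‖⁻¹ • (k₁ - k₂), (σ : R3)⟫_ℝ) ∂sphMeas)
          ≤ ENNReal.ofReal C * ∫⁻ x : R3, ENNReal.ofReal |ψ x|) := by
  set C := (8 * sphMeas Set.univ).toReal + 1
  have hC (A : ℝ≥0∞) : sphMeas Set.univ * (8 * A) ≤ ENNReal.ofReal C * A := by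
    rw [← mul_assoc, mul_comm (sphMeas _)]
    gcongr
    rw [ENNReal.le_ofReal_iff_toReal_le (by finiteness) (by positivity)]
    linarith
  have hb : Measurable bInd := measurable_const.indicator measurableSet_Ioi
  refine ⟨C, by positivity, fun ψ hψ => ⟨fun k₁ => ?_, fun k₂ => ?_⟩⟩
  · refine (lintegral_lintegral_le_measure_univ_mul ?_ (lintegral_kst2_le ψ k₁)).trans (hC _)
    unfold kst2
    fun_prop
  · refine (lintegral_lintegral_le_measure_univ_mul ?_ (lintegral_kst1_le ψ k₂)).trans (hC _)
    unfold kst1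
    fun_prop
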